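/- arXiv:2603.20761 — 2 statements merged into one kernel-verified Lean document; each statement's English description precedes it below -/
import Mathlib

section
/- Let V₁ and V₂ be isometries defining irreducible quantum Markov chains with the same environment dimension k and system dimensions d₁ and d₂, with stationary states admitting spectral decompositions ρ_lˢˢ = Σ_i π_{l,i} φ_{l,i} φ_{l,i}ᴴ (with (φ_{l,i})_{i=1,…,d_l} an orthonormal basis of ℂ^{d_l} and π_{l,i} ≥ 0, for l = 1,2). Let T₁₂ be the linear map on d₁×d₂ complex matrices T₁₂(X) = V₁ᴴ (X ⊗ 1_k) V₂. Then for every n ≥ 1, the overlap of the stationary output states satisfies: tr( ρ_{V₁}^out(n) · ρ_{V₂}^out(n) ) = Σ_{m,p=1}^{d₁} Σ_{m',p'=1}^{d₂} π_{1,p} π_{2,p'} · | ⟨ φ_{1,p}, ( T₁₂ⁿ( φ_{1,m} φ_{2,m'}ᴴ ) ) φ_{2,p'} ⟩ |². -/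
open Matrix Filter
open scoped Kronecker ComplexConjugate ComplexOrder

noncomputable section

namespace QMCPaper

/-- The `j`-th block (Kraus operator style) of a `(d₁·k)×d₂` matrix. -/
def blk {d₁ d₂ k : ℕ} (V : Matrix (Fin d₁ × Fin k) (Fin d₂) ℂ) (j : Fin k) :
    Matrix (Fin d₁) (Fin d₂) ℂ :=
  fun a b => V (a, j) b

/-- The Kraus operators of a QMC isometry. -/
def kraus {d k : ℕ} (V : Matrix (Fin d × Fin k) (Fin d) ℂ) (j : Fin k) :
    Matrix (Fin d) (Fin d) ℂ :=
  blk V j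

/-- The transition channel `T_V(X) = Vᴴ (X ⊗ 1_k) V = Σ_j K_jᴴ X K_j`. -/
def chan {d k : ℕ} (V : Matrix (Fin d × Fin k) (Fin d) ℂ)
    (X : Matrix (Fin d) (Fin d) ℂ) : Matrix (Fin d) (Fin d) ℂ :=
  ∑ j : Fin k, (kraus V j)ᴴ * X * kraus V j

/-- The predual channel `T_{V*}(ρ) = Σ_j K_j ρ K_jᴴ`. -/
def predual {d k : ℕ} (V : Matrix (Fin d × Fin k) (Fin d) ℂ)
    (ρ : Matrix (Fin d) (Fin d) ℂ) : Matrix (Fin d) (Fin d) ℂ :=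
  ∑ j : Fin k, kraus V j * ρ * (kraus V j)ᴴ

/-- A state: positive semidefinite matrix of trace one. -/
def IsState {d : ℕ} (ρ : Matrix (Fin d) (Fin d) ℂ) : Prop :=
  ρ.PosSemidef ∧ ρ.trace = 1

/-- `V` is an isometry defining an irreducible QMC with (unique, faithful) stationary
state `ρss`. -/
def IsIrreducible {d k : ℕ} (V : Matrix (Fin d × Fin k) (Fin d) ℂ)
    (ρss : Matrix (Fin d) (Fin d) ℂ) : Prop :=
  Vᴴ * V = 1 ∧ IsState ρss ∧ predual V ρss = ρss ∧ ρss.PosDef ∧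
    ∀ ρ, IsState ρ → predual V ρ = ρ → ρ = ρss

/-- For a word `i = (i_0, …, i_{n-1})`, the operator `K_i = K_{i_{n-1}} ⋯ K_{i_0}`. -/
def krausWord {d k : ℕ} (V : Matrix (Fin d × Fin k) (Fin d) ℂ) {n : ℕ}
    (i : Fin n → Fin k) : Matrix (Fin d) (Fin d) ℂ :=
  ((List.ofFn i).reverse.map (kraus V)).prod

/-- The output state at time `n` with initial system state `ρ`:
its `(i,j)` entry is `tr(K_i ρ K_jᴴ)`. -/
def outState {d k : ℕ} (V : Matrix (Fin d × Fin k) (Fin d) ℂ)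
    (ρ : Matrix (Fin d) (Fin d) ℂ) (n : ℕ) :
    Matrix (Fin n → Fin k) (Fin n → Fin k) ℂ :=
  fun i j => (krausWord V i * ρ * (krausWord V j)ᴴ).trace

/-- Output equivalence (with given initial states): equality of all output states. -/
def OutputEquiv {d₁ d₂ k : ℕ}
    (V₁ : Matrix (Fin d₁ × Fin k) (Fin d₁) ℂ) (ρ₁ : Matrix (Fin d₁) (Fin d₁) ℂ)
    (V₂ : Matrix (Fin d₂ × Fin k) (Fin d₂) ℂ) (ρ₂ : Matrix (Fin d₂) (Fin d₂) ℂ) : Prop :=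
  ∀ n : ℕ, 1 ≤ n → ∀ i j : Fin n → Fin k,
    (krausWord V₁ i * ρ₁ * (krausWord V₁ j)ᴴ).trace =
      (krausWord V₂ i * ρ₂ * (krausWord V₂ j)ᴴ).trace

/-- A (possibly rectangular) unitary matrix. -/
def IsUnitaryMat {d₁ d₂ : ℕ} (W : Matrix (Fin d₁) (Fin d₂) ℂ) : Prop :=
  Wᴴ * W = 1 ∧ W * Wᴴ = 1

end QMCPaper

namespace QMCPaper

/-- The map `T₁₂(X) = V₁ᴴ (X ⊗ 1_k) V₂` between two QMCs. -/
def chan12 {d₁ d₂ k : ℕ} (V₁ : Matrix (Fin d₁ × Fin k) (Fin d₁) ℂ)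
    (V₂ : Matrix (Fin d₂ × Fin k) (Fin d₂) ℂ)
    (X : Matrix (Fin d₁) (Fin d₂) ℂ) : Matrix (Fin d₁) (Fin d₂) ℂ :=
  V₁ᴴ * (X ⊗ₖ (1 : Matrix (Fin k) (Fin k) ℂ)) * V₂

/-!
Expanding the spectral decompositions, both sides are sums over `p, p'` weighted by
`π₁ p * π₂ p'`, so it suffices to treat pure states `u uᴴ` and `v vᴴ`. For those, the
output-state entries are `⟨K_j u, K_i u⟩`, while `T₁₂ⁿ X = Σ_i (K¹_i)ᴴ X K²_i` over words `i`.
Hence `|⟨u, T₁₂ⁿ(φ₁ₘ φ₂ₘ'ᴴ) v⟩|²` is a double sum over words `i, j`, and summing over the two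
orthonormal bases (Parseval) leaves `Σ_{i,j} ⟨K¹_i u, K¹_j u⟩ ⟨K²_j v, K²_i v⟩`, which is the
trace of the product of the two output states.
-/

section Parseval

variable {n : Type*} [Fintype n] [DecidableEq n] {φ : n → n → ℂ}

theorem sum_vecMulVec_star_eq_one
    (hon : ∀ m p, star (φ m) ⬝ᵥ φ p = if m = p then (1 : ℂ) else 0) :
    ∑ m, vecMulVec (φ m) (star (φ m)) = 1 := by
  -- `hon` says `Φᴴ Φ = 1` for the matrix `Φ` with columns `φ m`; completeness is `Φ Φᴴ = 1`.
  let Φ : Matrix n n ℂ := Matrix.of fun a m => φ m a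
  have hΦ : Φᴴ * Φ = 1 := by
    ext m p
    simpa [Φ, Matrix.mul_apply, Matrix.one_apply, dotProduct] using hon m p
  ext a b
  simpa [Φ, Matrix.mul_apply, Matrix.sum_apply, vecMulVec_apply] using
    congrFun (congrFun (mul_eq_one_comm.mp hΦ : Φ * Φᴴ = 1) a) b

theorem sum_star_dotProduct_mul_star_dotProduct
    (hon : ∀ m p, star (φ m) ⬝ᵥ φ p = if m = p then (1 : ℂ) else 0) (x y : n → ℂ) :
    ∑ m, (star x ⬝ᵥ φ m) * (star (φ m) ⬝ᵥ y) = star x ⬝ᵥ y := by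
  calc ∑ m, (star x ⬝ᵥ φ m) * (star (φ m) ⬝ᵥ y)
      = star x ⬝ᵥ ((∑ m, vecMulVec (φ m) (star (φ m))) *ᵥ y) := by
        simp only [Matrix.sum_mulVec, dotProduct_sum, vecMulVec_mulVec, op_smul_eq_smul,
          dotProduct_smul, smul_eq_mul, mul_comm]
    _ = star x ⬝ᵥ y := by rw [sum_vecMulVec_star_eq_one hon, one_mulVec]

end Parseval

section Sandwich

variable {a b c e : Type*} [Fintype a] [Fintype b] [Fintype c] [Fintype e]

theorem trace_mul_vecMulVec_star_mul_conjTranspose (A C : Matrix a b ℂ) (u : b → ℂ) :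
    (A * vecMulVec u (star u) * Cᴴ).trace = star (C *ᵥ u) ⬝ᵥ (A *ᵥ u) := by
  rw [mul_vecMulVec, vecMulVec_mul, trace_vecMulVec, ← star_mulVec, dotProduct_comm]

theorem star_dotProduct_conjTranspose_mul_vecMulVec_mul_mulVec (A : Matrix a b ℂ)
    (B : Matrix c e ℂ) (x : a → ℂ) (y : c → ℂ) (u : b → ℂ) (v : e → ℂ) :
    star u ⬝ᵥ ((Aᴴ * vecMulVec x (star y) * B) *ᵥ v) =
      (star (A *ᵥ u) ⬝ᵥ x) * (star y ⬝ᵥ (B *ᵥ v)) := by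
  rw [← mulVec_mulVec, ← mulVec_mulVec, vecMulVec_mulVec, op_smul_eq_smul, mulVec_smul,
    dotProduct_smul, smul_eq_mul, dotProduct_mulVec (star u) Aᴴ, ← star_mulVec, mul_comm]

end Sandwich

theorem sum_sum_norm_sq_star_dotProduct_sum_sandwich
    {n₁ n₂ α β ι : Type*} [Fintype n₁] [DecidableEq n₁] [Fintype n₂] [DecidableEq n₂]
    [Fintype α] [Fintype β] [Fintype ι] {φ₁ : n₁ → n₁ → ℂ} {φ₂ : n₂ → n₂ → ℂ}
    (hon₁ : ∀ m p, star (φ₁ m) ⬝ᵥ φ₁ p = if m = p then (1 : ℂ) else 0)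
    (hon₂ : ∀ m p, star (φ₂ m) ⬝ᵥ φ₂ p = if m = p then (1 : ℂ) else 0)
    (A : ι → Matrix n₁ α ℂ) (B : ι → Matrix n₂ β ℂ) (u : α → ℂ) (v : β → ℂ) :
    ∑ m, ∑ m', ((‖star u ⬝ᵥ
        ((∑ i, (A i)ᴴ * vecMulVec (φ₁ m) (star (φ₂ m')) * B i) *ᵥ v)‖ ^ 2 : ℝ) : ℂ) =
      ∑ i, ∑ j, (star (A i *ᵥ u) ⬝ᵥ (A j *ᵥ u)) * (star (B j *ᵥ v) ⬝ᵥ (B i *ᵥ v)) := by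
  have hexpand : ∀ m m', ((‖star u ⬝ᵥ
      ((∑ i, (A i)ᴴ * vecMulVec (φ₁ m) (star (φ₂ m')) * B i) *ᵥ v)‖ ^ 2 : ℝ) : ℂ) =
      ∑ i, ∑ j, ((star (A i *ᵥ u) ⬝ᵥ φ₁ m) * (star (φ₁ m) ⬝ᵥ (A j *ᵥ u))) *
        ((star (B j *ᵥ v) ⬝ᵥ φ₂ m') * (star (φ₂ m') ⬝ᵥ (B i *ᵥ v))) := by
    intro m m'
    rw [Complex.ofReal_pow, ← Complex.mul_conj', Matrix.sum_mulVec, dotProduct_sum, map_sum,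
      Finset.sum_mul_sum]
    simp only [star_dotProduct_conjTranspose_mul_vecMulVec_mul_mulVec, map_mul,
      starRingEnd_apply, ← star_dotProduct]
    exact Finset.sum_congr rfl fun i _ => Finset.sum_congr rfl fun j _ => by ring
  simp_rw [hexpand, Finset.sum_comm (s := (Finset.univ : Finset n₁)),
    Finset.sum_comm (s := (Finset.univ : Finset n₂)), ← Finset.sum_mul_sum,
    sum_star_dotProduct_mul_star_dotProduct hon₁, sum_star_dotProduct_mul_star_dotProduct hon₂]

section OutputStates

variable {d d₁ d₂ k : ℕ}

theorem chan12_eq_sum (V₁ : Matrix (Fin d₁ × Fin k) (Fin d₁) ℂ)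
    (V₂ : Matrix (Fin d₂ × Fin k) (Fin d₂) ℂ) (X : Matrix (Fin d₁) (Fin d₂) ℂ) :
    chan12 V₁ V₂ X = ∑ j, (kraus V₁ j)ᴴ * X * kraus V₂ j := by
  ext a b
  simp only [chan12, kraus, blk, Matrix.mul_apply, conjTranspose_apply, Matrix.sum_apply,
    kroneckerMap_apply, Matrix.one_apply, Fintype.sum_prod_type, mul_ite, mul_one, mul_zero,
    Finset.sum_mul, Finset.sum_ite_eq', Finset.mem_univ, if_true]
  exact Finset.sum_comm

theorem krausWord_cons (V : Matrix (Fin d × Fin k) (Fin d) ℂ) {n : ℕ}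
    (j : Fin k) (i : Fin n → Fin k) :
    krausWord V (Fin.cons j i : Fin (n + 1) → Fin k) = krausWord V i * kraus V j := by
  simp [krausWord, List.ofFn_succ]

theorem chan12_iterate_eq_sum (V₁ : Matrix (Fin d₁ × Fin k) (Fin d₁) ℂ)
    (V₂ : Matrix (Fin d₂ × Fin k) (Fin d₂) ℂ) (X : Matrix (Fin d₁) (Fin d₂) ℂ) (n : ℕ) :
    (chan12 V₁ V₂)^[n] X = ∑ i : Fin n → Fin k, (krausWord V₁ i)ᴴ * X * krausWord V₂ i := by
  induction n with
  | zero => simp [krausWord]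
  | succ n ih =>
    rw [Function.iterate_succ_apply', ih, chan12_eq_sum,
      ← (Fin.consEquiv fun _ => Fin k).sum_comp, Fintype.sum_prod_type]
    refine Finset.sum_congr rfl fun j _ => ?_
    simp only [Fin.consEquiv, Equiv.coe_fn_mk, krausWord_cons, conjTranspose_mul, Matrix.mul_sum,
      Matrix.sum_mul, Matrix.mul_assoc]

theorem outState_sum_smul {ι : Type*} [Fintype ι] (V : Matrix (Fin d × Fin k) (Fin d) ℂ)
    (c : ι → ℂ) (ρ : ι → Matrix (Fin d) (Fin d) ℂ) (n : ℕ) :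
    outState V (∑ p, c p • ρ p) n = ∑ p, c p • outState V (ρ p) n := by
  ext i j
  simp [outState, Matrix.mul_sum, Matrix.sum_mul, trace_sum, Matrix.sum_apply]

theorem outState_vecMulVec (V : Matrix (Fin d × Fin k) (Fin d) ℂ) (u : Fin d → ℂ) {n : ℕ}
    (i j : Fin n → Fin k) :
    outState V (vecMulVec u (star u)) n i j =
      star (krausWord V j *ᵥ u) ⬝ᵥ (krausWord V i *ᵥ u) :=
  trace_mul_vecMulVec_star_mul_conjTranspose _ _ u

theorem trace_outState_vecMulVec_mul_outState_vecMulVec {φ₁ : Fin d₁ → Fin d₁ → ℂ}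
    {φ₂ : Fin d₂ → Fin d₂ → ℂ}
    (hon₁ : ∀ m p, star (φ₁ m) ⬝ᵥ φ₁ p = if m = p then (1 : ℂ) else 0)
    (hon₂ : ∀ m p, star (φ₂ m) ⬝ᵥ φ₂ p = if m = p then (1 : ℂ) else 0)
    (V₁ : Matrix (Fin d₁ × Fin k) (Fin d₁) ℂ) (V₂ : Matrix (Fin d₂ × Fin k) (Fin d₂) ℂ)
    (u : Fin d₁ → ℂ) (v : Fin d₂ → ℂ) (n : ℕ) :
    (outState V₁ (vecMulVec u (star u)) n * outState V₂ (vecMulVec v (star v)) n).trace =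
      ∑ m, ∑ m', ((‖star u ⬝ᵥ
        ((chan12 V₁ V₂)^[n] (vecMulVec (φ₁ m) (star (φ₂ m'))) *ᵥ v)‖ ^ 2 : ℝ) : ℂ) := by
  simp only [chan12_iterate_eq_sum, sum_sum_norm_sq_star_dotProduct_sum_sandwich hon₁ hon₂,
    Matrix.trace, Matrix.diag, Matrix.mul_apply, outState_vecMulVec]
  rw [Finset.sum_comm]

end OutputStates

theorem outState_overlap_general {d₁ d₂ k : ℕ}
    (V₁ : Matrix (Fin d₁ × Fin k) (Fin d₁) ℂ) (ρ₁ : Matrix (Fin d₁) (Fin d₁) ℂ)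
    (V₂ : Matrix (Fin d₂ × Fin k) (Fin d₂) ℂ) (ρ₂ : Matrix (Fin d₂) (Fin d₂) ℂ)
    (π₁ : Fin d₁ → ℝ) (φ₁ : Fin d₁ → Fin d₁ → ℂ)
    (π₂ : Fin d₂ → ℝ) (φ₂ : Fin d₂ → Fin d₂ → ℂ)
    (hon₁ : ∀ m p, star (φ₁ m) ⬝ᵥ φ₁ p = if m = p then (1 : ℂ) else 0)
    (hon₂ : ∀ m p, star (φ₂ m) ⬝ᵥ φ₂ p = if m = p then (1 : ℂ) else 0)
    (hdecomp₁ : ρ₁ = ∑ i, (π₁ i : ℂ) • Matrix.vecMulVec (φ₁ i) (star (φ₁ i)))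
    (hdecomp₂ : ρ₂ = ∑ i, (π₂ i : ℂ) • Matrix.vecMulVec (φ₂ i) (star (φ₂ i))) :
    ∀ n : ℕ, 1 ≤ n →
      (outState V₁ ρ₁ n * outState V₂ ρ₂ n).trace =
        ∑ m : Fin d₁, ∑ p : Fin d₁, ∑ m' : Fin d₂, ∑ p' : Fin d₂,
          ((π₁ p : ℂ) * (π₂ p' : ℂ)) *
            ((‖star (φ₁ p) ⬝ᵥ
                (((chan12 V₁ V₂)^[n] (Matrix.vecMulVec (φ₁ m) (star (φ₂ m')))) *ᵥ φ₂ p')‖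
              ^ 2 : ℝ) : ℂ) := by
  intro n _
  subst hdecomp₁ hdecomp₂
  simp only [outState_sum_smul, Matrix.sum_mul, trace_sum, smul_mul_smul_comm, trace_smul,
    smul_eq_mul, trace_outState_vecMulVec_mul_outState_vecMulVec hon₁ hon₂, Finset.mul_sum]
  conv_lhs => rw [Finset.sum_comm]
  conv_rhs => rw [Finset.sum_comm]
  exact Finset.sum_congr rfl fun p _ => Finset.sum_comm_cycle.symm

/-- Lemma: overlap formula for stationary output states. -/
theorem outState_overlap {d₁ d₂ k : ℕ}
    (V₁ : Matrix (Fin d₁ × Fin k) (Fin d₁) ℂ) (ρ₁ : Matrix (Fin d₁) (Fin d₁) ℂ)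
    (V₂ : Matrix (Fin d₂ × Fin k) (Fin d₂) ℂ) (ρ₂ : Matrix (Fin d₂) (Fin d₂) ℂ)
    (h₁ : IsIrreducible V₁ ρ₁) (h₂ : IsIrreducible V₂ ρ₂)
    (π₁ : Fin d₁ → ℝ) (φ₁ : Fin d₁ → Fin d₁ → ℂ)
    (π₂ : Fin d₂ → ℝ) (φ₂ : Fin d₂ → Fin d₂ → ℂ)
    (hπ₁ : ∀ i, 0 ≤ π₁ i) (hπ₂ : ∀ i, 0 ≤ π₂ i)
    (hon₁ : ∀ m p, star (φ₁ m) ⬝ᵥ φ₁ p = if m = p then (1 : ℂ) else 0)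
    (hon₂ : ∀ m p, star (φ₂ m) ⬝ᵥ φ₂ p = if m = p then (1 : ℂ) else 0)
    (hdecomp₁ : ρ₁ = ∑ i, (π₁ i : ℂ) • Matrix.vecMulVec (φ₁ i) (star (φ₁ i)))
    (hdecomp₂ : ρ₂ = ∑ i, (π₂ i : ℂ) • Matrix.vecMulVec (φ₂ i) (star (φ₂ i))) :
    ∀ n : ℕ, 1 ≤ n →
      (outState V₁ ρ₁ n * outState V₂ ρ₂ n).trace =
        ∑ m : Fin d₁, ∑ p : Fin d₁, ∑ m' : Fin d₂, ∑ p' : Fin d₂,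
          ((π₁ p : ℂ) * (π₂ p' : ℂ)) *
            ((‖star (φ₁ p) ⬝ᵥ
                (((chan12 V₁ V₂)^[n] (Matrix.vecMulVec (φ₁ m) (star (φ₂ m')))) *ᵥ φ₂ p')‖
              ^ 2 : ℝ) : ℂ) :=
  outState_overlap_general V₁ ρ₁ V₂ ρ₂ π₁ φ₁ π₂ φ₂ hon₁ hon₂ hdecomp₁ hdecomp₂

end QMCPaper
end
end

section
/- Let V be an isometry defining an irreducible quantum Markov chain with system dimension d and environment dimension k, with stationary state ρˢˢ. Then: (a) the fixed point space of the transition channel is trivial, i.e. every d×d complex matrix X with T_V(X) = X is a scalar multiple of the identity matrix; (b) the linear map Id − T_V maps the subspace S := { X : d×d complex matrix with tr(ρˢˢ X) = 0 } bijectively onto itself. -/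
open Matrix Filter
open scoped Kronecker ComplexConjugate ComplexOrder

noncomputable section

/-!
`T_V` is unital and, for the trace pairing `⟨ρ, X⟩ = tr(ρ X)`, its transpose is the
predual `T_{V*}`; hence `Id − T_V` and `Id − T_{V*}` have kernels of the same dimension.
Irreducibility makes the kernel of `Id − T_{V*}` the line through `ρˢˢ`: a traceless Hermitian fixed
point `H` would give the second stationary state `ρˢˢ + εH` for small `ε > 0`, since `ρˢˢ` is
positive definite. So the fixed points of `T_V` are the multiples of `1`. Finally `Id − T_V` maps
into `S` because `ρˢˢ` is stationary, and it is injective on `S` because `tr ρˢˢ = 1`; in finite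
dimension that makes it bijective.
-/

open scoped MatrixOrder

namespace Matrix

variable {n : Type*} [Fintype n]

section

variable [DecidableEq n]

lemma IsHermitian.algebraMap_le {A : Matrix n n ℂ} (hA : A.IsHermitian) {r : ℝ}
    (hr : ∀ i, r ≤ hA.eigenvalues i) : algebraMap ℝ (Matrix n n ℂ) r ≤ A :=
  algebraMap_le_of_le_spectrum (fun x hx => by
    obtain ⟨i, rfl⟩ := hA.spectrum_real_eq_range_eigenvalues ▸ hx
    exact hr i) hA.isSelfAdjoint

lemma PosDef.exists_posSemidef_add_smul {A H : Matrix n n ℂ} (hA : A.PosDef)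
    (hH : H.IsHermitian) : ∃ ε : ℝ, 0 < ε ∧ (A + ε • H).PosSemidef := by
  cases isEmpty_or_nonempty n
  · exact ⟨1, one_pos, Subsingleton.elim 0 (A + (1 : ℝ) • H) ▸ PosSemidef.zero⟩
  obtain ⟨i, hi⟩ := Finite.exists_min hA.1.eigenvalues
  obtain ⟨j, hj⟩ := Finite.exists_min hH.eigenvalues
  set r := hA.1.eigenvalues i
  set c := |hH.eigenvalues j| + 1
  have hr : 0 < r := hA.eigenvalues_pos i
  have hc : 0 < c := by positivity
  have hrA : algebraMap ℝ _ r ≤ A := hA.1.algebraMap_le hi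
  have hcH : algebraMap ℝ _ (-c) ≤ H := hH.algebraMap_le fun l => (hj l).trans' (by
    have := neg_abs_le (hH.eigenvalues j)
    linarith)
  have hshift : (r / c) • algebraMap ℝ (Matrix n n ℂ) (-c) = -algebraMap ℝ _ r := by
    rw [Algebra.smul_def, ← map_mul, ← map_neg]
    congr 1
    field_simp
  have hsplit : A + (r / c) • H =
      (A - algebraMap ℝ _ r) + (r / c) • (H - algebraMap ℝ _ (-c)) := by
    rw [smul_sub, hshift]
    abel
  refine ⟨r / c, by positivity, ?_⟩
  rw [hsplit]
  exact (le_iff.mp hrA).add ((le_iff.mp hcH).smul (by positivity))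

end

def traceDual : Matrix n n ℂ →ₗ[ℂ] Module.Dual ℂ (Matrix n n ℂ) :=
  (LinearMap.mul ℂ (Matrix n n ℂ)).compr₂ (traceLinearMap n ℂ ℂ)

@[simp] lemma traceDual_apply (ρ X : Matrix n n ℂ) : traceDual ρ X = (ρ * X).trace := rfl

lemma traceDual_injective : Function.Injective (traceDual : Matrix n n ℂ →ₗ[ℂ] _) := by
  classical
  exact fun _ _ h => ext_iff_trace_mul_right.mpr fun X => LinearMap.congr_fun h X

end Matrix

lemma LinearMap.finrank_range_le_of_dualMap_comp {K V W : Type*} [Field K]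
    [AddCommGroup V] [Module K V] [FiniteDimensional K V]
    [AddCommGroup W] [Module K W] [FiniteDimensional K W]
    {f : V →ₗ[K] V} {g : W →ₗ[K] W} {e : W →ₗ[K] Module.Dual K V}
    (he : Function.Injective e) (h : ∀ w, f.dualMap (e w) = e (g w)) :
    Module.finrank K (LinearMap.range g) ≤ Module.finrank K (LinearMap.range f) := by
  have hrange : (LinearMap.range g).map e ≤ LinearMap.range f.dualMap := by
    rintro _ ⟨_, ⟨w, rfl⟩, rfl⟩
    exact ⟨e w, h w⟩
  calc Module.finrank K (LinearMap.range g)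
      = Module.finrank K ((LinearMap.range g).map e) :=
        (LinearEquiv.finrank_eq (Submodule.equivMapOfInjective e he _))
    _ ≤ Module.finrank K (LinearMap.range f.dualMap) := Submodule.finrank_mono hrange
    _ = Module.finrank K (LinearMap.range f) := f.finrank_range_dualMap_eq_finrank_range

lemma LinearMap.existsUnique_mem_apply_eq {K V : Type*} [Field K] [AddCommGroup V] [Module K V]
    [FiniteDimensional K V] (f : V →ₗ[K] V) {p : Submodule K V} (hmaps : ∀ x ∈ p, f x ∈ p)
    (hinj : ∀ x ∈ p, f x = 0 → x = 0) {y : V} (hy : y ∈ p) : ∃! x, x ∈ p ∧ f x = y := by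
  have hinj' : Function.Injective (f.restrict hmaps) := by
    rw [← LinearMap.ker_eq_bot, LinearMap.ker_eq_bot']
    exact fun x hx => Subtype.ext (hinj x x.2 (congrArg Subtype.val hx))
  obtain ⟨x, hx⟩ := LinearMap.injective_iff_surjective.mp hinj' ⟨y, hy⟩
  refine ⟨x, ⟨x.2, congrArg Subtype.val hx⟩, fun x' ⟨hx'p, hx'⟩ => ?_⟩
  have hsame : f.restrict hmaps ⟨x', hx'p⟩ = f.restrict hmaps x :=
    Subtype.ext (hx'.trans (congrArg Subtype.val hx).symm)
  exact congrArg Subtype.val (hinj' hsame)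

namespace QMCPaper

section

variable {d k : ℕ} (V : Matrix (Fin d × Fin k) (Fin d) ℂ)

local notation "Mat" => Matrix (Fin d) (Fin d) ℂ

def chanL : Mat →ₗ[ℂ] Mat where
  toFun := chan V
  map_add' X Y := by simp [chan, Matrix.mul_add, Matrix.add_mul, Finset.sum_add_distrib]
  map_smul' c X := by simp [chan, Finset.smul_sum]

def predualL : Mat →ₗ[ℂ] Mat where
  toFun := predual V
  map_add' X Y := by simp [predual, Matrix.mul_add, Matrix.add_mul, Finset.sum_add_distrib]
  map_smul' c X := by simp [predual, Finset.smul_sum]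

@[simp] lemma chanL_apply (X : Mat) : chanL V X = chan V X := rfl

@[simp] lemma predualL_apply (ρ : Mat) : predualL V ρ = predual V ρ := rfl

lemma chan_one (hV : Vᴴ * V = 1) : chan V 1 = 1 := by
  refine Eq.trans ?_ hV
  ext a b
  simp only [chan, Matrix.mul_one, Matrix.sum_apply, Matrix.mul_apply, conjTranspose_apply,
    kraus, blk]
  rw [Fintype.sum_prod_type, Finset.sum_comm]

lemma trace_mul_chan (ρ X : Mat) : (ρ * chan V X).trace = (predual V ρ * X).trace := by
  simp only [chan, predual, Matrix.mul_sum, Matrix.sum_mul, trace_sum]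
  refine Finset.sum_congr rfl fun j _ => ?_
  rw [← Matrix.mul_assoc, ← Matrix.mul_assoc, trace_mul_comm]
  simp only [Matrix.mul_assoc]

lemma predual_conjTranspose (ρ : Mat) : predual V ρᴴ = (predual V ρ)ᴴ := by
  simp [predual, conjTranspose_sum, Matrix.mul_assoc]

lemma finrank_ker_id_sub_chanL :
    Module.finrank ℂ (LinearMap.ker (LinearMap.id - chanL V)) =
      Module.finrank ℂ (LinearMap.ker (LinearMap.id - predualL V)) := by
  have hrange : Module.finrank ℂ (LinearMap.range (LinearMap.id - chanL V)) =
      Module.finrank ℂ (LinearMap.range (LinearMap.id - predualL V)) := by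
    refine le_antisymm (LinearMap.finrank_range_le_of_dualMap_comp traceDual_injective
      fun X => ?_) (LinearMap.finrank_range_le_of_dualMap_comp traceDual_injective fun ρ => ?_)
    · ext ρ
      simp [Matrix.mul_sub, trace_mul_comm X, trace_mul_comm (chan V X), trace_mul_chan]
    · ext X
      simp [Matrix.mul_sub, trace_mul_chan]
  have hf := (LinearMap.id - chanL V).finrank_range_add_finrank_ker
  have hg := (LinearMap.id - predualL V).finrank_range_add_finrank_ker
  omega

variable {V} {ρss : Matrix (Fin d) (Fin d) ℂ}

lemma trace_mul_sub_chan (hfix : predual V ρss = ρss) (X : Mat) :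
    (ρss * (X - chan V X)).trace = 0 := by
  rw [Matrix.mul_sub, trace_sub, trace_mul_chan, hfix, sub_self]

lemma eq_zero_of_predual_eq_self (h : IsIrreducible V ρss) {H : Mat} (hH : H.IsHermitian)
    (hfix : predual V H = H) (htr : H.trace = 0) : H = 0 := by
  obtain ⟨-, ⟨-, hρtr⟩, hρfix, hρpd, huniq⟩ := h
  obtain ⟨ε, hε, hpsd⟩ := hρpd.exists_posSemidef_add_smul hH
  have hstate : IsState (ρss + ε • H) := ⟨hpsd, by simp [trace_add, htr, hρtr]⟩
  have hstat : predual V (ρss + ε • H) = ρss + ε • H := by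
    rw [← predualL_apply]
    simp only [map_add, LinearMap.map_smul_of_tower, predualL_apply, hρfix, hfix]
  simpa [hε.ne'] using huniq _ hstate hstat

lemma eq_trace_smul_of_predual_eq_self (h : IsIrreducible V ρss) {Y : Mat}
    (hfix : predual V Y = Y) : Y = Y.trace • ρss := by
  have ⟨_, ⟨_, hρtr⟩, hρfix, _, _⟩ := h
  have hermitian_part : ∀ Z : Mat, predual V Z = Z → Z.trace = 0 → Z + Zᴴ = 0 :=
    fun Z hZ htr => eq_zero_of_predual_eq_self h (isHermitian_add_transpose_self Z)
      (by rw [← predualL_apply]; simp only [map_add, predualL_apply, predual_conjTranspose, hZ])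
      (by simp [trace_conjTranspose, htr])
  set Y₀ := Y - Y.trace • ρss
  have hY₀ : predual V Y₀ = Y₀ := by
    rw [← predualL_apply]
    simp only [Y₀, map_sub, map_smul, predualL_apply, hfix, hρfix]
  have htr₀ : Y₀.trace = 0 := by simp [Y₀, hρtr]
  have h₁ := hermitian_part Y₀ hY₀ htr₀
  have h₂ : Y₀ - Y₀ᴴ = 0 := by
    have hI := hermitian_part (Complex.I • Y₀)
      (by rw [← predualL_apply]; simp only [map_smul, predualL_apply, hY₀]) (by simp [htr₀])
    rw [conjTranspose_smul, Complex.star_def, Complex.conj_I, neg_smul, ← sub_eq_add_neg,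
      ← smul_sub] at hI
    exact (smul_eq_zero.mp hI).resolve_left Complex.I_ne_zero
  have hY₀_zero : Y₀ = 0 := by
    linear_combination (norm := module) (1 / 2 : ℂ) • h₁ + (1 / 2 : ℂ) • h₂
  exact sub_eq_zero.mp hY₀_zero

lemma ker_id_sub_predualL (h : IsIrreducible V ρss) :
    LinearMap.ker (LinearMap.id - predualL V) = Submodule.span ℂ {ρss} := by
  ext Y
  simp only [LinearMap.mem_ker, LinearMap.sub_apply, LinearMap.id_apply, predualL_apply,
    sub_eq_zero, Submodule.mem_span_singleton]
  refine ⟨fun hY => ⟨Y.trace, (eq_trace_smul_of_predual_eq_self h hY.symm).symm⟩, ?_⟩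
  rintro ⟨c, rfl⟩
  rw [← predualL_apply, map_smul, predualL_apply, h.2.2.1]

lemma ker_id_sub_chanL (h : IsIrreducible V ρss) :
    LinearMap.ker (LinearMap.id - chanL V) = Submodule.span ℂ {(1 : Mat)} := by
  have ⟨hV, ⟨_, hρtr⟩, _, _, _⟩ := h
  have hρ : ρss ≠ 0 := by rintro rfl; simp at hρtr
  have hone : (1 : Mat) ≠ 0 := fun h1 => hρ (by rw [← Matrix.mul_one ρss, h1, Matrix.mul_zero])
  refine (Submodule.eq_of_le_of_finrank_eq ?_ ?_).symm
  · rw [Submodule.span_singleton_le_iff_mem, LinearMap.mem_ker, LinearMap.sub_apply,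
      LinearMap.id_apply, chanL_apply, chan_one V hV, sub_self]
  · rw [finrank_span_singleton hone, finrank_ker_id_sub_chanL, ker_id_sub_predualL h,
      finrank_span_singleton hρ]

lemma exists_eq_smul_one_of_chan_eq_self (h : IsIrreducible V ρss) {X : Mat}
    (hX : chan V X = X) : ∃ c : ℂ, X = c • (1 : Mat) := by
  have hker : X ∈ LinearMap.ker (LinearMap.id - chanL V) := by simp [hX]
  obtain ⟨c, hc⟩ := Submodule.mem_span_singleton.mp (ker_id_sub_chanL h ▸ hker)
  exact ⟨c, hc.symm⟩

lemma existsUnique_sub_chan_eq (h : IsIrreducible V ρss) {Y : Mat} (hY : (ρss * Y).trace = 0) :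
    ∃! X : Mat, (ρss * X).trace = 0 ∧ X - chan V X = Y := by
  have ⟨_, ⟨_, hρtr⟩, hstat, _, _⟩ := h
  have hinj : ∀ X ∈ LinearMap.ker (Matrix.traceDual ρss),
      (LinearMap.id - chanL V : Mat →ₗ[ℂ] Mat) X = 0 → X = 0 := by
    intro X hXS hX
    obtain ⟨c, rfl⟩ := exists_eq_smul_one_of_chan_eq_self h (sub_eq_zero.mp hX).symm
    have hc : c = 0 := by simpa [hρtr] using hXS
    rw [hc, zero_smul]
  simpa using (LinearMap.id - chanL V).existsUnique_mem_apply_eq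
    (p := LinearMap.ker (Matrix.traceDual ρss))
    (by simpa using fun X _ => trace_mul_sub_chan hstat X) hinj (by simpa using hY)

end

/-- fixed points of the transition channel are trivial, and
`Id − T_V` is a bijection of the hyperplane `{X : tr(ρˢˢ X) = 0}` onto itself. -/
theorem fixed_points_and_inverse {d k : ℕ}
    (V : Matrix (Fin d × Fin k) (Fin d) ℂ) (ρss : Matrix (Fin d) (Fin d) ℂ)
    (h : IsIrreducible V ρss) :
    -- (a) trivial fixed point space
    (∀ X : Matrix (Fin d) (Fin d) ℂ, chan V X = X →
      ∃ c : ℂ, X = c • (1 : Matrix (Fin d) (Fin d) ℂ)) ∧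
    -- (b) `Id − T_V` maps `S = {X : tr(ρˢˢ X) = 0}` into itself …
    (∀ X : Matrix (Fin d) (Fin d) ℂ, (ρss * X).trace = 0 →
      (ρss * (X - chan V X)).trace = 0) ∧
    -- … bijectively
    (∀ Y : Matrix (Fin d) (Fin d) ℂ, (ρss * Y).trace = 0 →
      ∃! X : Matrix (Fin d) (Fin d) ℂ, (ρss * X).trace = 0 ∧ X - chan V X = Y) := by
  have ⟨_, _, hstat, _, _⟩ := h
  exact ⟨fun X => exists_eq_smul_one_of_chan_eq_self h, fun X _ => trace_mul_sub_chan hstat X,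
    fun Y => existsUnique_sub_chan_eq h⟩

end QMCPaper
end
end
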